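/- arXiv:2512.11601 — 3 statements merged into one kernel-verified Lean document; each statement's English description precedes it below -/
import Mathlib

section
/- For every ℓ ≥ 1, the ranges of the sequences (a_n) and (b_n) defined by the mex recursion form a partition of the set of natural numbers strictly greater than ℓ: every integer m > ℓ equals exactly one of a_n or b_n for exactly one index n, and the two ranges are disjoint. -/
/-- The minimum excluded value of a set of natural numbers. -/
noncomputable def mex (S : Set ℕ) : ℕ := sInf {m : ℕ | m ∉ S}

/-- `MexSeq ℓ a b` says that `a`, `b` are the sequences defined by
    `a 0 = ℓ+1`, `b 0 = 2ℓ+2`, and for `n ≥ 1`: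
    `a n = mex({a i, b i : i < n} ∪ {0,…,ℓ})`, `b n = a n + n + ℓ + 1`. -/
def MexSeq (ℓ : ℕ) (a b : ℕ → ℕ) : Prop :=
  a 0 = ℓ + 1 ∧ b 0 = 2 * ℓ + 2 ∧
  (∀ n : ℕ, 1 ≤ n →
    a n = mex ({m : ℕ | ∃ i < n, m = a i ∨ m = b i} ∪ {m : ℕ | m ≤ ℓ})) ∧
  (∀ n : ℕ, 1 ≤ n → b n = a n + n + ℓ + 1)

/-!
`a n` is the least number above `ℓ` not yet listed, so `a` is strictly increasing and
`b n - a n = n + ℓ + 1` makes `b` strictly increasing as well. A value `b n` can never later be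
picked as some `a m` (it is already listed), nor equal an earlier `a m ≤ a n < b n`. Finally every
`m > ℓ` is listed by step `m`, because `a m ≥ ℓ + 1 + m > m` and everything below `a m` is listed.
-/

theorem mex_notMem {S : Set ℕ} (hS : S.Finite) : mex S ∉ S :=
  Nat.sInf_mem hS.exists_notMem

theorem mem_of_lt_mex {S : Set ℕ} {k : ℕ} (h : k < mex S) : k ∈ S :=
  not_not.mp (Nat.notMem_of_lt_sInf h)

theorem mex_Iic (ℓ : ℕ) : mex {m | m ≤ ℓ} = ℓ + 1 :=
  le_antisymm (Nat.sInf_le (by simp))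
    (Nat.succ_le_of_lt (not_le.mp (mex_notMem (Set.finite_Iic ℓ))))

def mexSeqPrefix (ℓ : ℕ) (a b : ℕ → ℕ) (n : ℕ) : Set ℕ :=
  {m : ℕ | ∃ i < n, m = a i ∨ m = b i} ∪ {m : ℕ | m ≤ ℓ}

theorem mexSeqPrefix_finite (ℓ : ℕ) (a b : ℕ → ℕ) (n : ℕ) : (mexSeqPrefix ℓ a b n).Finite := by
  refine Set.Finite.union ?_ (Set.finite_Iic ℓ)
  refine ((Set.finite_Iio n).biUnion fun i _ => Set.toFinite {a i, b i}).subset ?_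
  rintro m ⟨i, hi, hm⟩
  exact Set.mem_biUnion hi hm

theorem mexSeqPrefix_mono (ℓ : ℕ) (a b : ℕ → ℕ) : Monotone (mexSeqPrefix ℓ a b) := by
  rintro n k hnk m (⟨i, hi, hm⟩ | hm)
  · exact Or.inl ⟨i, hi.trans_le hnk, hm⟩
  · exact Or.inr hm

namespace MexSeq

variable {ℓ : ℕ} {a b : ℕ → ℕ}

theorem a_eq_mex (h : MexSeq ℓ a b) (n : ℕ) : a n = mex (mexSeqPrefix ℓ a b n) := by
  cases n with
  | zero =>
    have hprefix : mexSeqPrefix ℓ a b 0 = {m | m ≤ ℓ} := by simp [mexSeqPrefix]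
    rw [h.1, hprefix, mex_Iic]
  | succ n => exact h.2.2.1 (n + 1) n.succ_pos

theorem b_eq (h : MexSeq ℓ a b) (n : ℕ) : b n = a n + n + ℓ + 1 := by
  cases n with
  | zero => rw [h.1, h.2.1]; ring
  | succ n => exact h.2.2.2 (n + 1) n.succ_pos

theorem a_notMem_prefix (h : MexSeq ℓ a b) (n : ℕ) : a n ∉ mexSeqPrefix ℓ a b n := by
  rw [h.a_eq_mex n]
  exact mex_notMem (mexSeqPrefix_finite ℓ a b n)

theorem mem_prefix_of_lt (h : MexSeq ℓ a b) {n k : ℕ} (hk : k < a n) :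
    k ∈ mexSeqPrefix ℓ a b n :=
  mem_of_lt_mex (h.a_eq_mex n ▸ hk)

theorem strictMono_a (h : MexSeq ℓ a b) : StrictMono a := by
  refine strictMono_nat_of_lt_succ fun n => lt_of_not_ge fun hle => ?_
  apply h.a_notMem_prefix (n + 1)
  rcases hle.lt_or_eq with hlt | heq
  · exact mexSeqPrefix_mono ℓ a b n.le_succ (h.mem_prefix_of_lt hlt)
  · exact Or.inl ⟨n, n.lt_succ_self, Or.inl heq⟩

theorem strictMono_b (h : MexSeq ℓ a b) : StrictMono b := by
  intro m n hmn
  have := h.strictMono_a hmn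
  rw [h.b_eq m, h.b_eq n]
  omega

theorem a_ne_b (h : MexSeq ℓ a b) (m n : ℕ) : a m ≠ b n := by
  intro heq
  rcases lt_or_ge n m with hnm | hmn
  · exact h.a_notMem_prefix m (Or.inl ⟨n, hnm, Or.inr heq⟩)
  · have := h.strictMono_a.monotone hmn
    have := h.b_eq n
    omega

theorem exists_a_or_b_eq (h : MexSeq ℓ a b) {m : ℕ} (hm : ℓ < m) : ∃ i, a i = m ∨ b i = m := by
  have hlt : m < a m := by
    have := h.strictMono_a.add_le_nat m 0
    rw [Nat.add_zero, h.1] at this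
    omega
  rcases h.mem_prefix_of_lt hlt with ⟨i, -, hi⟩ | hle
  · exact ⟨i, hi.imp Eq.symm Eq.symm⟩
  · exact absurd hle (not_le.mpr hm)

end MexSeq

theorem mexSeq_partition_general (ℓ : ℕ) (a b : ℕ → ℕ)
    (hab : MexSeq ℓ a b) :
    (∀ m : ℕ, ℓ < m →
      ((∃! n : ℕ, a n = m) ∧ ¬ ∃ n : ℕ, b n = m) ∨
      ((∃! n : ℕ, b n = m) ∧ ¬ ∃ n : ℕ, a n = m)) ∧
    Disjoint (Set.range a) (Set.range b) := by
  refine ⟨fun m hm => ?_, Set.disjoint_left.mpr ?_⟩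
  · obtain ⟨i, rfl | rfl⟩ := hab.exists_a_or_b_eq hm
    · exact Or.inl ⟨hab.strictMono_a.injective.existsUnique_of_mem_range ⟨i, rfl⟩,
        fun ⟨n, hn⟩ => hab.a_ne_b i n hn.symm⟩
    · exact Or.inr ⟨hab.strictMono_b.injective.existsUnique_of_mem_range ⟨i, rfl⟩,
        fun ⟨n, hn⟩ => hab.a_ne_b n i hn⟩
  · rintro _ ⟨m, rfl⟩ ⟨n, hn⟩
    exact hab.a_ne_b m n hn.symm

theorem mexSeq_partition (ℓ : ℕ) (hℓ : 1 ≤ ℓ) (a b : ℕ → ℕ)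
    (hab : MexSeq ℓ a b) :
    (∀ m : ℕ, ℓ < m →
      ((∃! n : ℕ, a n = m) ∧ ¬ ∃ n : ℕ, b n = m) ∨
      ((∃! n : ℕ, b n = m) ∧ ¬ ∃ n : ℕ, a n = m)) ∧
    Disjoint (Set.range a) (Set.range b) :=
  mexSeq_partition_general ℓ a b hab
end

section
/- The set R₂ := {(0,0)} ∪ {(n, 2n+1), (2n+1, n) : n ≥ 0} ∪ {(2⌊nφ⌋+2, 2⌊nφ²⌋+2), (2⌊nφ²⌋+2, 2⌊nφ⌋+2) : n ≥ 0} is 'blocking-absorbing' for one blocked option: for every (p,q) ∈ ℕ² not in R₂, there exist at least two distinct Wythoff options of (p,q) belonging to R₂. -/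
/-!
Write `A n = ⌊nφ⌋` and `B n = ⌊nφ²⌋ = A n + n`. By Rayleigh's theorem every natural number is
some `A n` or some `B n`, so every even column `2a + 2` contains a point `(2A n + 2, 2B n + 2)`
of `R₂` or the mirror image of one. By symmetry take `p ≤ q`. Above the line `q = 2p + 1`,
`(p, q)` has the option on that line in its column and the point of `R₂` that its column has
below height `2p`. Below the line, the diagonal through `(p, q)` meets the line `q = 2p + 1`,
and a second option comes from an odd coordinate (through the lines `q = 2p + 1`, `p = 2q + 1`)
or, when both coordinates are even, from the column through `p` unless its Wythoff point
`(2A k + 2, 2B k + 2)` lies above `q`. Then `(q - p) / 2 < k`, and the Wythoff point of index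
`(q - p) / 2` lies on the diagonal through `(p, q)`, below it because `A` is increasing.
-/

noncomputable def phi : ℝ := (1 + Real.sqrt 5) / 2

/-- `(r,s)` is a Wythoff option of `(p,q)`. -/
def WOpt (p q : ℕ × ℕ) : Prop :=
  (q.1 = p.1 ∧ q.2 < p.2) ∨ (q.1 < p.1 ∧ q.2 = p.2) ∨
  (q.1 < p.1 ∧ q.2 < p.2 ∧ p.1 - q.1 = p.2 - q.2)

/-- The claimed set of P-positions of the blocking game `W²`. -/
noncomputable def R2 : Set (ℕ × ℕ) :=
  {(0, 0)} ∪
  {p : ℕ × ℕ | ∃ n : ℕ, p = (n, 2 * n + 1) ∨ p = (2 * n + 1, n)} ∪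
  {p : ℕ × ℕ | ∃ n : ℕ,
    p = (2 * ⌊(n : ℝ) * phi⌋₊ + 2, 2 * ⌊(n : ℝ) * phi ^ 2⌋₊ + 2) ∨
    p = (2 * ⌊(n : ℝ) * phi ^ 2⌋₊ + 2, 2 * ⌊(n : ℝ) * phi⌋₊ + 2)}

lemma phi_sq : phi ^ 2 = phi + 1 := Real.goldenRatio_sq

lemma holderConjugate_phi_phi_sq : phi.HolderConjugate (phi ^ 2) := by
  have hpos : phi ≠ 0 := Real.goldenRatio_ne_zero
  rw [Real.holderConjugate_iff]
  refine ⟨Real.one_lt_goldenRatio, ?_⟩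
  field_simp
  linear_combination -phi_sq

open scoped symmDiff in
theorem Irrational.exists_nat_floor_mul_eq_or {r s : ℝ} (hrs : r.HolderConjugate s)
    (hr : Irrational r) (m : ℕ) : ∃ k : ℕ, ⌊(k : ℝ) * r⌋₊ = m ∨ ⌊(k : ℝ) * s⌋₊ = m := by
  rcases Nat.eq_zero_or_pos m with rfl | hm
  · exact ⟨0, by simp⟩
  have of_beatty : ∀ t : ℝ, (m : ℤ) ∈ {beattySeq t k | k > 0} → ∃ k : ℕ, ⌊(k : ℝ) * t⌋₊ = m := by
    rintro t ⟨k, hk, hkm⟩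
    lift k to ℕ using hk.le
    refine ⟨k, ?_⟩
    rw [← Int.floor_toNat]
    simpa [beattySeq] using congrArg Int.toNat hkm
  have hmem : (m : ℤ) ∈ {beattySeq r k | k > 0} ∆ {beattySeq s k | k > 0} := by
    rw [hr.beattySeq_symmDiff_beattySeq_pos hrs]
    exact Int.natCast_pos.mpr hm
  rcases Set.mem_symmDiff.mp hmem with ⟨h, -⟩ | ⟨h, -⟩
  · exact (of_beatty r h).imp fun _ => Or.inl
  · exact (of_beatty s h).imp fun _ => Or.inr

lemma strictMono_nat_floor_mul {r : ℝ} (hr : 1 ≤ r) :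
    StrictMono fun n : ℕ => ⌊(n : ℝ) * r⌋₊ := by
  refine strictMono_nat_of_lt_succ fun n => ?_
  have hstep : (n : ℝ) * r + 1 ≤ ((n + 1 : ℕ) : ℝ) * r := by push_cast; linarith
  calc ⌊(n : ℝ) * r⌋₊ < ⌊(n : ℝ) * r⌋₊ + 1 := Nat.lt_succ_self _
    _ = ⌊(n : ℝ) * r + 1⌋₊ := (Nat.floor_add_one (by positivity)).symm
    _ ≤ ⌊((n + 1 : ℕ) : ℝ) * r⌋₊ := Nat.floor_le_floor hstep

noncomputable def wythoffA (n : ℕ) : ℕ := ⌊(n : ℝ) * phi⌋₊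

noncomputable def wythoffB (n : ℕ) : ℕ := ⌊(n : ℝ) * phi ^ 2⌋₊

lemma wythoffB_eq_wythoffA_add (n : ℕ) : wythoffB n = wythoffA n + n := by
  have hphi : 0 ≤ phi := Real.goldenRatio_pos.le
  rw [wythoffB, phi_sq, mul_add, mul_one, Nat.floor_add_natCast (by positivity), wythoffA]

lemma wythoffA_zero : wythoffA 0 = 0 := by simp [wythoffA]

lemma wythoffA_strictMono : StrictMono wythoffA :=
  strictMono_nat_floor_mul Real.one_lt_goldenRatio.le

lemma le_wythoffA (n : ℕ) : n ≤ wythoffA n := wythoffA_strictMono.id_le n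

lemma exists_wythoffA_eq_or_wythoffB_eq (m : ℕ) :
    ∃ k, wythoffA k = m ∨ wythoffB k = m :=
  Real.goldenRatio_irrational.exists_nat_floor_mul_eq_or holderConjugate_phi_phi_sq m

lemma zero_mem_R2 : ((0, 0) : ℕ × ℕ) ∈ R2 := Or.inl (Or.inl rfl)

lemma mk_two_mul_add_one_mem_R2 (n : ℕ) : ((n, 2 * n + 1) : ℕ × ℕ) ∈ R2 :=
  Or.inl (Or.inr ⟨n, Or.inl rfl⟩)

lemma wythoff_mem_R2 (n : ℕ) : ((2 * wythoffA n + 2, 2 * wythoffB n + 2) : ℕ × ℕ) ∈ R2 :=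
  Or.inr ⟨n, Or.inl rfl⟩

lemma two_two_mem_R2 : ((2, 2) : ℕ × ℕ) ∈ R2 := by
  simpa [wythoffB_eq_wythoffA_add, wythoffA_zero] using wythoff_mem_R2 0

lemma swap_mem_R2 {p : ℕ × ℕ} (h : p ∈ R2) : p.swap ∈ R2 := by
  rcases h with (rfl | ⟨n, rfl | rfl⟩) | ⟨n, rfl | rfl⟩
  · exact zero_mem_R2
  · exact Or.inl (Or.inr ⟨n, Or.inr rfl⟩)
  · exact Or.inl (Or.inr ⟨n, Or.inl rfl⟩)
  · exact Or.inr ⟨n, Or.inr rfl⟩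
  · exact Or.inr ⟨n, Or.inl rfl⟩

lemma two_mul_add_one_mk_mem_R2 (n : ℕ) : ((2 * n + 1, n) : ℕ × ℕ) ∈ R2 :=
  swap_mem_R2 (mk_two_mul_add_one_mem_R2 n)

lemma wythoff_swap_mem_R2 (n : ℕ) :
    ((2 * wythoffB n + 2, 2 * wythoffA n + 2) : ℕ × ℕ) ∈ R2 :=
  swap_mem_R2 (wythoff_mem_R2 n)

namespace WOpt

lemma of_snd_lt {p q s : ℕ} (h : s < q) : WOpt (p, q) (p, s) := Or.inl ⟨rfl, h⟩

lemma of_fst_lt {p q r : ℕ} (h : r < p) : WOpt (p, q) (r, q) := Or.inr (Or.inl ⟨h, rfl⟩)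

lemma of_sub_eq {p q r s : ℕ} (hr : r < p) (hs : s < q) (h : p - r = q - s) :
    WOpt (p, q) (r, s) := Or.inr (Or.inr ⟨hr, hs, h⟩)

lemma swap {p q : ℕ × ℕ} (h : WOpt p q) : WOpt p.swap q.swap := by
  rcases h with ⟨h₁, h₂⟩ | ⟨h₁, h₂⟩ | ⟨h₁, h₂, h₃⟩
  · exact Or.inr (Or.inl ⟨h₂, h₁⟩)
  · exact Or.inl ⟨h₂, h₁⟩
  · exact Or.inr (Or.inr ⟨h₂, h₁, h₃.symm⟩)

end WOpt

def HasTwoOptionsIn (S : Set (ℕ × ℕ)) (p : ℕ × ℕ) : Prop :=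
  ∃ q₁ ∈ S, ∃ q₂ ∈ S, q₁ ≠ q₂ ∧ WOpt p q₁ ∧ WOpt p q₂

lemma HasTwoOptionsIn.of_swap {S : Set (ℕ × ℕ)} (hS : ∀ q ∈ S, q.swap ∈ S) {p : ℕ × ℕ}
    (h : HasTwoOptionsIn S p.swap) : HasTwoOptionsIn S p := by
  obtain ⟨q₁, h₁, q₂, h₂, hne, w₁, w₂⟩ := h
  exact ⟨q₁.swap, hS q₁ h₁, q₂.swap, hS q₂ h₂, Prod.swap_injective.ne hne, w₁.swap, w₂.swap⟩

lemma hasTwoOptionsIn_R2_diag {p : ℕ} (h : (p, p) ∉ R2) : HasTwoOptionsIn R2 (p, p) := by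
  have h₀ : p ≠ 0 := by rintro rfl; exact h zero_mem_R2
  have h₂ : p ≠ 2 := by rintro rfl; exact h two_two_mem_R2
  rcases (by omega : p = 1 ∨ 3 ≤ p) with rfl | hp
  · exact ⟨(0, 0), zero_mem_R2, (0, 1), mk_two_mul_add_one_mem_R2 0, by decide,
      .of_sub_eq (by omega) (by omega) rfl, .of_fst_lt (by omega)⟩
  · exact ⟨(0, 0), zero_mem_R2, (2, 2), two_two_mem_R2, by decide,
      .of_sub_eq (by omega) (by omega) rfl, .of_sub_eq (by omega) (by omega) rfl⟩

lemma exists_snd_le_mk_mem_R2 (p : ℕ) : ∃ s ≤ 2 * p, (p, s) ∈ R2 := by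
  rcases Nat.even_or_odd' p with ⟨m, rfl | rfl⟩
  · rcases m with _ | m
    · exact ⟨0, le_rfl, zero_mem_R2⟩
    obtain ⟨k, rfl | rfl⟩ := exists_wythoffA_eq_or_wythoffB_eq m
    · refine ⟨2 * wythoffB k + 2, ?_, wythoff_mem_R2 k⟩
      have := le_wythoffA k
      rw [wythoffB_eq_wythoffA_add]; omega
    · refine ⟨2 * wythoffA k + 2, ?_, wythoff_swap_mem_R2 k⟩
      rw [wythoffB_eq_wythoffA_add]; omega
  · exact ⟨m, by omega, two_mul_add_one_mk_mem_R2 m⟩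

lemma hasTwoOptionsIn_R2_of_two_mul_add_one_lt {p q : ℕ} (hq : 2 * p + 1 < q) :
    HasTwoOptionsIn R2 (p, q) := by
  obtain ⟨s, hs, hmem⟩ := exists_snd_le_mk_mem_R2 p
  exact ⟨(p, 2 * p + 1), mk_two_mul_add_one_mem_R2 p, (p, s), hmem,
    by simp only [ne_eq, Prod.mk.injEq]; omega, .of_snd_lt hq, .of_snd_lt (by omega)⟩

lemma exists_option_mem_R2_of_even {a b : ℕ} (hab : a < b) (hb : b ≤ 2 * a + 1)
    (h : (2 * a + 2, 2 * b + 2) ∉ R2) :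
    ∃ r ∈ R2, WOpt (2 * a + 2, 2 * b + 2) r ∧ 2 * (b - a) ≤ r.1 := by
  obtain ⟨k, hk | hk⟩ := exists_wythoffA_eq_or_wythoffB_eq a
  · rcases lt_trichotomy (wythoffB k) b with hlt | heq | hgt
    · refine ⟨_, wythoff_mem_R2 k, ?_, by dsimp only; omega⟩
      rw [hk]
      exact .of_snd_lt (by omega)
    · exact absurd (hk ▸ heq ▸ wythoff_mem_R2 k) h
    · rw [wythoffB_eq_wythoffA_add] at hgt
      have hlt : wythoffA (b - a) < a := hk ▸ wythoffA_strictMono (by omega)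
      have := le_wythoffA (b - a)
      refine ⟨_, wythoff_mem_R2 (b - a), ?_, by dsimp only; omega⟩
      rw [wythoffB_eq_wythoffA_add]
      exact .of_sub_eq (by omega) (by omega) (by omega)
  · refine ⟨_, wythoff_swap_mem_R2 k, ?_, by dsimp only; omega⟩
    rw [hk]
    exact .of_snd_lt (by rw [wythoffB_eq_wythoffA_add] at hk; omega)

lemma exists_option_mem_R2_of_le_two_mul {p q : ℕ} (hpq : p < q) (hq : q ≤ 2 * p)
    (h : (p, q) ∉ R2) : ∃ r ∈ R2, WOpt (p, q) r ∧ q - p ≤ r.1 := by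
  rcases Nat.even_or_odd' q with ⟨n, rfl | rfl⟩
  · rcases Nat.even_or_odd' p with ⟨m, rfl | rfl⟩
    · obtain ⟨r, hr, hopt, hr₁⟩ :=
        exists_option_mem_R2_of_even (a := m - 1) (b := n - 1) (by omega) (by omega)
          (by convert h using 3 <;> omega)
      refine ⟨r, hr, ?_, by omega⟩
      convert hopt using 3 <;> omega
    · exact ⟨(2 * m + 1, m), two_mul_add_one_mk_mem_R2 m, .of_snd_lt (by omega),
        by dsimp only; omega⟩
  · exact ⟨(n, 2 * n + 1), mk_two_mul_add_one_mem_R2 n, .of_fst_lt (by omega),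
      by dsimp only; omega⟩

lemma hasTwoOptionsIn_R2_of_le_two_mul {p q : ℕ} (hpq : p < q) (hq : q ≤ 2 * p)
    (h : (p, q) ∉ R2) : HasTwoOptionsIn R2 (p, q) := by
  obtain ⟨r, hr, hopt, hr₁⟩ := exists_option_mem_R2_of_le_two_mul hpq hq h
  refine ⟨(q - p - 1, 2 * (q - p - 1) + 1), mk_two_mul_add_one_mem_R2 _, r, hr, ?_,
    .of_sub_eq (by omega) (by omega) (by omega), hopt⟩
  rintro rfl
  dsimp only at hr₁; omega

lemma hasTwoOptionsIn_R2_of_le {p q : ℕ} (hpq : p ≤ q) (h : (p, q) ∉ R2) :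
    HasTwoOptionsIn R2 (p, q) := by
  rcases hpq.eq_or_lt with rfl | hlt
  · exact hasTwoOptionsIn_R2_diag h
  rcases lt_trichotomy q (2 * p + 1) with hq | rfl | hq
  · exact hasTwoOptionsIn_R2_of_le_two_mul hlt (by omega) h
  · exact absurd (mk_two_mul_add_one_mem_R2 p) h
  · exact hasTwoOptionsIn_R2_of_two_mul_add_one_lt hq

/-- Blocking-absorption of `R₂`: every position outside `R₂` has at least two
    distinct Wythoff options in `R₂`. -/
theorem R2_blocking_absorbing :
    ∀ p : ℕ × ℕ, p ∉ R2 →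
      ∃ q₁ ∈ R2, ∃ q₂ ∈ R2, q₁ ≠ q₂ ∧ WOpt p q₁ ∧ WOpt p q₂ := by
  rintro ⟨p, q⟩ h
  rcases le_total p q with hpq | hqp
  · exact hasTwoOptionsIn_R2_of_le hpq h
  · exact HasTwoOptionsIn.of_swap (fun _ => swap_mem_R2)
      (hasTwoOptionsIn_R2_of_le hqp fun hm => h (swap_mem_R2 hm))
end

section
/- Let h be the Hofstadter G-sequence (h(0)=0, h(n)=n-h(h(n-1))). Define g : ℕ → ℕ by g(0) = g(1) = 1 and for n ≥ 2: g(n) = 1 - g(h(n-1)) if h(n-2) < h(n-1), and g(n) = 1 otherwise. Then g takes only values 0 and 1, and the sequence g is Fibonacci-automatic: g(n) is computed by a finite automaton reading the Zeckendorf representation of n. -/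
/-!
Write α = φ⁻¹ = -ψ. The identity ⌊(n + 1)α⌋ + ⌊(⌊nα⌋ + 1)α⌋ = n turns the recursion for `h` into
`h n = ⌊(n + 1)α⌋`, and then the recursion for `g` into `g (n + 1) = h (n + 1) - h n`.

For a digit string `L` of value `n = Σ dᵢ F(i+2)`, the identity `F k + ψ F (k+1) = ψ^(k+1)` gives
`nα = m - ψ² P` with `m = Σ dᵢ F(i+1)` and `P = Σ dᵢ ψⁱ ∈ (-1, φ)`. Hence `⌊(n + 1)α⌋ = m` and
`⌊nα⌋ = m - [P > 0]`, so `g n = 0` exactly when `P < 0`. Reading the digits most significant first,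
a `1` makes `P` positive and a `0` flips its sign, so three states (the sign of `P`) suffice.
-/

/-- Value of a list of Fibonacci digits, least significant digit first,
    digit `i` having weight `F_i` where `F_0 = 1, F_1 = 2, F_{k+2}=F_{k+1}+F_k`
    (i.e. `F_i = fib (i+2)` for Mathlib's `Nat.fib`). -/
def zvalAux : ℕ → List Bool → ℕ
  | _, [] => 0
  | k, d :: L => (if d then Nat.fib k else 0) + zvalAux (k + 1) L

def zval (L : List Bool) : ℕ := zvalAux 2 L

/-- `ZeckRep n L` : `L` (least significant digit first) is the Zeckendorf
    (greedy Fibonacci) representation of `n`: correct value, no two adjacent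
    `1`s, and nonzero leading (most significant) digit. -/
def ZeckRep (n : ℕ) (L : List Bool) : Prop :=
  zval L = n ∧ List.Chain' (fun x y => ¬(x = true ∧ y = true)) L ∧
    L.getLast? ≠ some false

open Real goldenRatio

lemma inv_goldenRatio_eq_sub_one : φ⁻¹ = φ - 1 := by
  rw [inv_goldenRatio, ← one_sub_goldenRatio]; ring

lemma floor_add_inv_goldenRatio_add_floor_sub_mul {f : ℝ} (hf0 : 0 ≤ f) (hf1 : f < 1)
    (hf : f + φ⁻¹ ≠ 1) : ⌊f + φ⁻¹⌋ + ⌊φ⁻¹ - f * φ⌋ = 0 := by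
  have hinv := inv_goldenRatio_eq_sub_one
  have hsq := goldenRatio_sq
  have hlt := goldenRatio_lt_two
  have hgt := one_lt_goldenRatio
  rcases hf.lt_or_gt with hlt1 | hgt1
  · have h1 : ⌊f + φ⁻¹⌋ = 0 := by rw [Int.floor_eq_iff]; constructor <;> push_cast <;> linarith
    have h2 : ⌊φ⁻¹ - f * φ⌋ = 0 := by rw [Int.floor_eq_iff]; constructor <;> push_cast <;> nlinarith
    rw [h1, h2]; rfl
  · have h1 : ⌊f + φ⁻¹⌋ = 1 := by rw [Int.floor_eq_iff]; constructor <;> push_cast <;> linarith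
    have h2 : ⌊φ⁻¹ - f * φ⌋ = -1 := by rw [Int.floor_eq_iff]; constructor <;> push_cast <;> nlinarith
    rw [h1, h2]; rfl

lemma floor_succ_div_goldenRatio_add_floor (n : ℕ) :
    ⌊((n : ℝ) + 1) / φ⌋ + ⌊((⌊(n : ℝ) / φ⌋ : ℝ) + 1) / φ⌋ = n := by
  set B := ⌊(n : ℝ) / φ⌋
  set f := Int.fract ((n : ℝ) / φ)
  have hB : (n : ℝ) / φ = B + f := (Int.floor_add_fract _).symm
  have hinv := inv_goldenRatio_eq_sub_one
  have hsucc : ((n : ℝ) + 1) / φ = B + (f + φ⁻¹) := by rw [add_div, hB, div_eq_mul_inv]; ring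
  have hfloor : ((B : ℝ) + 1) / φ = ((n - B : ℤ) : ℝ) + (φ⁻¹ - f * φ) := by
    have : (B : ℝ) = n / φ - f := by linarith
    push_cast; rw [this, div_eq_mul_inv, div_eq_mul_inv, hinv]
    linear_combination (n : ℝ) * goldenRatio_sq
  have hirr : f + φ⁻¹ ≠ 1 := by
    intro h1
    refine ((goldenRatio_irrational.inv).natCast_mul (Nat.succ_ne_zero n)).ne_int (B + 1) ?_
    push_cast; rw [← div_eq_mul_inv, hsucc, h1]
  rw [hsucc, hfloor, Int.floor_intCast_add, Int.floor_intCast_add]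
  linear_combination
    floor_add_inv_goldenRatio_add_floor_sub_mul (Int.fract_nonneg _) (Int.fract_lt_one _) hirr

lemma floor_succ_div_goldenRatio_nonneg (n : ℕ) : 0 ≤ ⌊((n : ℝ) + 1) / φ⌋ :=
  Int.floor_nonneg.mpr (by positivity)

lemma floor_succ_div_goldenRatio_le (n : ℕ) : ⌊((n : ℝ) + 1) / φ⌋ ≤ n := by
  rw [← Int.lt_add_one_iff, Int.floor_lt, div_lt_iff₀ goldenRatio_pos]
  push_cast
  nlinarith [one_lt_goldenRatio]

section Hofstadter

variable {h : ℕ → ℕ}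

theorem hofstadter_eq_floor (h0 : h 0 = 0)
    (hrec : ∀ n : ℕ, 1 ≤ n → h n = n - h (h (n - 1))) (n : ℕ) :
    (h n : ℤ) = ⌊((n : ℝ) + 1) / φ⌋ := by
  induction n using Nat.strong_induction_on with
  | _ n ih =>
    rcases n with _ | k
    · have := floor_succ_div_goldenRatio_le 0
      have := floor_succ_div_goldenRatio_nonneg 0
      rw [h0]; omega
    · have hk := ih k k.lt_succ_self
      have hhk : (h (h k) : ℤ) = ⌊(⌊((k : ℝ) + 1) / φ⌋ + 1) / φ⌋ := by
        have hlt : h k < k + 1 := by have := floor_succ_div_goldenRatio_le k; omega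
        rw [ih (h k) hlt]
        congr 3
        exact_mod_cast hk
      have key := floor_succ_div_goldenRatio_add_floor (k + 1)
      have hle : h (h k) ≤ k + 1 := by
        have := floor_succ_div_goldenRatio_nonneg (k + 1)
        push_cast at key this
        omega
      rw [hrec (k + 1) (by omega), Nat.add_sub_cancel, Nat.cast_sub hle, hhk]
      push_cast at key ⊢
      linarith

lemma hofstadter_le_self (h0 : h 0 = 0) (hrec : ∀ n : ℕ, 1 ≤ n → h n = n - h (h (n - 1)))
    (n : ℕ) : h n ≤ n := by
  have := hofstadter_eq_floor h0 hrec n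
  have := floor_succ_div_goldenRatio_le n
  omega

lemma hofstadter_succ_add (h0 : h 0 = 0) (hrec : ∀ n : ℕ, 1 ≤ n → h n = n - h (h (n - 1)))
    (n : ℕ) : h (n + 1) + h (h n) = n + 1 := by
  have := hofstadter_le_self h0 hrec (h n)
  have := hofstadter_le_self h0 hrec n
  rw [hrec (n + 1) (by omega), Nat.add_sub_cancel]
  omega

lemma hofstadter_le_succ (h0 : h 0 = 0) (hrec : ∀ n : ℕ, 1 ≤ n → h n = n - h (h (n - 1)))
    (n : ℕ) : h n ≤ h (n + 1) ∧ h (n + 1) ≤ h n + 1 := by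
  have hsucc : (((n + 1 : ℕ) : ℝ) + 1) / φ = ((n : ℝ) + 1) / φ + φ⁻¹ := by
    push_cast; ring
  have hinv := inv_goldenRatio_eq_sub_one
  have hlo : ⌊((n : ℝ) + 1) / φ⌋ ≤ ⌊(((n + 1 : ℕ) : ℝ) + 1) / φ⌋ := by
    rw [hsucc]; exact Int.floor_mono (by linarith [one_lt_goldenRatio])
  have hhi : ⌊(((n + 1 : ℕ) : ℝ) + 1) / φ⌋ ≤ ⌊((n : ℝ) + 1) / φ⌋ + 1 := by
    rw [hsucc, ← Int.floor_add_one]; exact Int.floor_mono (by linarith [goldenRatio_lt_two])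
  have := hofstadter_eq_floor h0 hrec n
  have := hofstadter_eq_floor h0 hrec (n + 1)
  omega

theorem g_succ_eq_hofstadter_sub {g : ℕ → ℕ} (h0 : h 0 = 0)
    (hrec : ∀ n : ℕ, 1 ≤ n → h n = n - h (h (n - 1))) (hg1 : g 1 = 1)
    (hgrec : ∀ n : ℕ, 2 ≤ n →
      g n = if h (n - 2) < h (n - 1) then 1 - g (h (n - 1)) else 1) (n : ℕ) :
    g (n + 1) = h (n + 1) - h n := by
  induction n using Nat.strong_induction_on with
  | _ n ih =>
    have hadd := hofstadter_succ_add h0 hrec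
    have hstep := hofstadter_le_succ h0 hrec
    rcases n with _ | n
    · have := hadd 0
      simp only [zero_add, h0] at this ⊢
      omega
    · rw [hgrec (n + 2) (by omega), show n + 2 - 2 = n by omega, show n + 2 - 1 = n + 1 by omega]
      have := hadd n
      have h2 := hadd (n + 1)
      have := hstep n
      split_ifs with hlt
      · have hk : h (n + 1) = h n + 1 := by omega
        have := ih (h n) (by have := hofstadter_le_self h0 hrec n; omega)
        have := hstep (h n)
        rw [hk] at h2 ⊢
        omega
      · have hk : h (n + 1) = h n := by omega
        rw [hk] at h2
        omega

end Hofstadter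

noncomputable def goldenConjEval : List Bool → ℝ
  | [] => 0
  | d :: L => (if d then 1 else 0) + ψ * goldenConjEval L

lemma zvalAux_add_goldenConj_mul (L : List Bool) (k : ℕ) :
    (zvalAux k L : ℝ) + ψ * zvalAux (k + 1) L = ψ ^ (k + 1) * goldenConjEval L := by
  induction L generalizing k with
  | nil => simp [zvalAux, goldenConjEval]
  | cons d L ih =>
    have hfib := goldenConj_mul_fib_succ_add_fib k
    cases d <;> simp only [zvalAux, goldenConjEval] <;> push_cast
    · linear_combination ih (k + 1)
    · linear_combination ih (k + 1) + hfib

lemma goldenConjEval_mem_Ioo (L : List Bool) : goldenConjEval L ∈ Set.Ioo (-1) φ := by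
  induction L with
  | nil => simp only [goldenConjEval]; exact ⟨by norm_num, goldenRatio_pos⟩
  | cons d L ih =>
    obtain ⟨hlo, hhi⟩ := ih
    have hψ := goldenConj_neg
    have hψφ := goldenConj_mul_goldenRatio
    have hsum := goldenRatio_add_goldenConj
    constructor <;> cases d <;> simp only [goldenConjEval] <;> norm_num <;> nlinarith

lemma sign_goldenConjEval_cons (d : Bool) (L : List Bool) :
    SignType.sign (goldenConjEval (d :: L)) =
      if d then 1 else -SignType.sign (goldenConjEval L) := by
  cases d
  · simp [goldenConjEval, sign_mul, sign_neg goldenConj_neg]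
  · have hψφ := goldenConj_mul_goldenRatio
    have := (goldenConjEval_mem_Ioo L).2
    simp only [goldenConjEval, if_true]
    exact sign_pos (by nlinarith [goldenConj_neg])

def signStep (s : SignType) (d : Bool) : SignType := if d then 1 else -s

lemma foldl_signStep_reverse (L : List Bool) :
    L.reverse.foldl signStep 0 = SignType.sign (goldenConjEval L) := by
  rw [List.foldl_reverse]
  induction L with
  | nil => simp [goldenConjEval]
  | cons d L ih => rw [List.foldr_cons, ih, sign_goldenConjEval_cons, signStep]

lemma zval_div_goldenRatio (L : List Bool) :
    (zval L : ℝ) / φ = zvalAux 1 L - ψ ^ 2 * goldenConjEval L := by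
  rw [div_eq_mul_inv, inv_goldenRatio, zval, ← zvalAux_add_goldenConj_mul L 1]
  ring

lemma goldenConj_sq_mul_goldenConjEval_mem_Ioo (L : List Bool) :
    ψ ^ 2 * goldenConjEval L ∈ Set.Ioo (-ψ ^ 2) (-ψ) := by
  obtain ⟨hlo, hhi⟩ := goldenConjEval_mem_Ioo L
  have hψ2 : 0 < ψ ^ 2 := sq_pos_of_neg goldenConj_neg
  have hψφ : ψ ^ 2 * φ = -ψ := by rw [sq, mul_assoc, goldenConj_mul_goldenRatio]; ring
  constructor
  · linarith [mul_lt_mul_of_pos_left hlo hψ2]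
  · linarith [mul_lt_mul_of_pos_left hhi hψ2]

lemma floor_zval_add_one_div_goldenRatio (L : List Bool) :
    ⌊((zval L : ℝ) + 1) / φ⌋ = zvalAux 1 L := by
  rw [add_div, zval_div_goldenRatio, div_eq_mul_inv, inv_goldenRatio, Int.floor_eq_iff]
  obtain ⟨hlo, hhi⟩ := goldenConj_sq_mul_goldenConjEval_mem_Ioo L
  have := goldenConj_sq
  push_cast
  constructor <;> linarith

lemma floor_zval_div_goldenRatio (L : List Bool) :
    ⌊(zval L : ℝ) / φ⌋ = zvalAux 1 L - if 0 < goldenConjEval L then 1 else 0 := by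
  rw [zval_div_goldenRatio, Int.floor_eq_iff]
  obtain ⟨hlo, hhi⟩ := goldenConj_sq_mul_goldenConjEval_mem_Ioo L
  have := goldenConj_sq
  have := goldenConj_neg
  have := neg_one_lt_goldenConj
  have hψ2 : 0 < ψ ^ 2 := sq_pos_of_neg goldenConj_neg
  split_ifs with hP
  · have := mul_pos hψ2 hP
    push_cast; constructor <;> linarith
  · have := mul_nonpos_of_nonneg_of_nonpos hψ2.le (not_lt.mp hP)
    push_cast; constructor <;> linarith

lemma goldenConjEval_ne_zero {L : List Bool} (hL : zval L ≠ 0) : goldenConjEval L ≠ 0 := by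
  intro hP
  have := zval_div_goldenRatio L
  rw [hP, mul_zero, sub_zero, div_eq_mul_inv, mul_comm] at this
  exact ((goldenRatio_irrational.inv).mul_natCast hL).ne_nat _ this

theorem g_zval_eq {h g : ℕ → ℕ} (h0 : h 0 = 0) (hrec : ∀ n : ℕ, 1 ≤ n → h n = n - h (h (n - 1)))
    (hg0 : g 0 = 1) (hg1 : g 1 = 1)
    (hgrec : ∀ n : ℕ, 2 ≤ n →
      g n = if h (n - 2) < h (n - 1) then 1 - g (h (n - 1)) else 1) (L : List Bool) :
    g (zval L) = if goldenConjEval L < 0 then 0 else 1 := by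
  rcases hn : zval L with _ | n
  · have hzero := zval_div_goldenRatio L
    rw [hn, Nat.cast_zero, zero_div] at hzero
    rw [hg0, if_neg]
    intro hP
    nlinarith [mul_neg_of_pos_of_neg (sq_pos_of_neg goldenConj_neg) hP]
  · have hP := goldenConjEval_ne_zero (hn.trans_ne n.succ_ne_zero)
    have hg := g_succ_eq_hofstadter_sub h0 hrec hg1 hgrec n
    have e1 := hofstadter_eq_floor h0 hrec (n + 1)
    have e0 := hofstadter_eq_floor h0 hrec n
    have f1 := floor_zval_add_one_div_goldenRatio L
    have f0 := floor_zval_div_goldenRatio L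
    have hstep := (hofstadter_le_succ h0 hrec n).1
    rw [hn] at f1 f0
    push_cast at e1 f1 f0
    rcases hP.lt_or_gt with hneg | hpos
    · rw [if_neg hneg.not_gt] at f0
      rw [if_pos hneg]
      omega
    · rw [if_pos hpos] at f0
      rw [if_neg hpos.not_gt]
      omega

/-- The sequence `g` built from the Hofstadter G-sequence `h` takes only the
    values `0` and `1`, and is Fibonacci-automatic: there is a finite automaton
    with output computing `g n` from the Zeckendorf representation of `n` read
    most significant digit first. -/
theorem g_fibonacci_automatic (h : ℕ → ℕ)
    (h0 : h 0 = 0)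
    (hrec : ∀ n : ℕ, 1 ≤ n → h n = n - h (h (n - 1)))
    (g : ℕ → ℕ)
    (hg0 : g 0 = 1) (hg1 : g 1 = 1)
    (hgrec : ∀ n : ℕ, 2 ≤ n →
      g n = if h (n - 2) < h (n - 1) then 1 - g (h (n - 1)) else 1) :
    (∀ n : ℕ, g n = 0 ∨ g n = 1) ∧
    ∃ (Q : Type) (_ : Fintype Q) (init : Q) (δ : Q → Bool → Q) (out : Q → ℕ),
      ∀ (n : ℕ) (L : List Bool), ZeckRep n L →
        g n = out (L.reverse.foldl δ init) := by
  refine ⟨fun n => ?_, SignType, inferInstance, 0, signStep, fun s => if s = -1 then 0 else 1, ?_⟩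
  · rcases n with _ | _ | n
    · exact .inr hg0
    · exact .inr hg1
    · rw [hgrec (n + 2) (by omega)]
      split_ifs <;> omega
  · rintro n L ⟨rfl, -, -⟩
    simp only [g_zval_eq h0 hrec hg0 hg1 hgrec, foldl_signStep_reverse, sign_eq_neg_one_iff]
end
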